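/- arXiv:math/0611097 — 3 statements merged into one kernel-verified Lean document; each statement's English description precedes it below -/
import Mathlib

section
/- Every generalized isometry is a ternary homomorphism: if u : E → F satisfies ⟨ux, uy⟩ = φ(⟨x, y⟩) for all x, y ∈ E and some *-homomorphism φ : B → C, then u(x⟨y, z⟩) = (ux)⟨uy, uz⟩ for all x, y, z ∈ E. -/
open scoped RightActions

/-- The December 2024 Mathlib `CStarModule` (right module, `SMul Aᵐᵒᵖ E`), restated verbatim:
Mathlib's `CStarModule` has since been changed to left modules. -/
class CStarModuleOld (A E : Type*) [NonUnitalSemiring A] [StarRing A] [Module ℂ A]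
    [AddCommGroup E] [Module ℂ E] [PartialOrder A] [SMul Aᵐᵒᵖ E] [Norm A] [Norm E]
    extends Inner A E where
  inner_add_right {x} {y} {z} : inner x (y + z) = inner x y + inner x z
  inner_self_nonneg {x} : 0 ≤ inner x x
  inner_self {x} : inner x x = 0 ↔ x = 0
  inner_op_smul_right {a : A} {x y : E} : inner x (y <• a) = inner x y * a
  inner_smul_right_complex {z : ℂ} {x} {y} : inner x (z • y) = z • inner x y
  star_inner x y : star (inner x y) = inner y x
  norm_eq_sqrt_norm_inner_self x : ‖x‖ = √‖inner x x‖

/-!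
Put `c := ⟨y, z⟩`, `a := u (x <• c)` and `b := u x <• ⟨u y, u z⟩ = u x <• φ c`. Since `u`
transports inner products along the *-homomorphism `φ`, each of `⟨a, a⟩`, `⟨a, b⟩`, `⟨b, a⟩`,
`⟨b, b⟩` equals `φ (c⋆ ⟨x, x⟩ c)`, so `⟨a - b, a - b⟩ = 0` and hence `a = b`.
-/

namespace CStarModuleOld

section InnerProduct

variable {A E : Type*} [NonUnitalRing A] [StarRing A] [Module ℂ A] [AddCommGroup E]
  [Module ℂ E] [PartialOrder A] [SMul Aᵐᵒᵖ E] [Norm A] [Norm E] [CStarModuleOld A E]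

theorem inner_sub_right (x y z : E) : inner A x (y - z) = inner A x y - inner A x z := by
  rw [eq_sub_iff_add_eq, ← inner_add_right, sub_add_cancel]

theorem inner_sub_left (x y z : E) : inner A (y - z) x = inner A y x - inner A z x := by
  rw [← star_inner x, inner_sub_right, star_sub, star_inner, star_inner]

theorem inner_op_smul_left (a : A) (x y : E) : inner A (x <• a) y = star a * inner A x y := by
  rw [← star_inner y, inner_op_smul_right, star_mul, star_inner]

theorem inner_op_smul_op_smul (a b : A) (x y : E) :
    inner A (x <• a) (y <• b) = star a * inner A x y * b := by
  rw [inner_op_smul_right, inner_op_smul_left, mul_assoc]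

theorem inner_sub_sub_self (a b : E) :
    inner A (a - b) (a - b) = inner A a a - inner A a b - inner A b a + inner A b b := by
  rw [inner_sub_left, inner_sub_right, inner_sub_right]
  abel

theorem eq_of_inner_eq {a b : E} {c : A} (haa : inner A a a = c) (hab : inner A a b = c)
    (hba : inner A b a = c) (hbb : inner A b b = c) : a = b := by
  have h : inner A (a - b) (a - b) = 0 := by
    rw [inner_sub_sub_self, haa, hab, hba, hbb]
    abel
  rwa [inner_self, sub_eq_zero] at h

end InnerProduct

section Isometry

variable {B C E F : Type*}
  [NonUnitalRing B] [StarRing B] [Module ℂ B] [PartialOrder B] [Norm B]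
  [NonUnitalRing C] [StarRing C] [Module ℂ C] [PartialOrder C] [Norm C]
  [AddCommGroup E] [Module ℂ E] [SMul Bᵐᵒᵖ E] [Norm E] [CStarModuleOld B E]
  [AddCommGroup F] [Module ℂ F] [SMul Cᵐᵒᵖ F] [Norm F] [CStarModuleOld C F]
  {φ : B →⋆ₙₐ[ℂ] C} {u : E → F}

theorem map_op_smul_inner_eq_op_smul_inner
    (hu : ∀ x y : E, (inner C (u x) (u y) : C) = φ (inner B x y)) (x y z : E) :
    u (x <• (inner B y z : B)) = (u x) <• (inner C (u y) (u z) : C) := by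
  set c := (inner B y z : B)
  have hφ : ∀ b : B, φ (star c * b * c) = star (φ c) * φ b * φ c := by
    simp only [map_mul, map_star, implies_true]
  refine eq_of_inner_eq (c := φ (star c * inner B x x * c)) ?_ ?_ ?_ ?_
  · rw [hu, inner_op_smul_op_smul]
  · rw [hu y, inner_op_smul_right, hu, inner_op_smul_left, hφ, map_mul, map_star]
  · rw [hu y, inner_op_smul_left, hu, inner_op_smul_right, hφ, map_mul, mul_assoc]
  · rw [hu y, inner_op_smul_op_smul, hu, hφ]

end Isometry

end CStarModuleOld

theorem stmt1_general {B C E F : Type*}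
    [NonUnitalCStarAlgebra B] [PartialOrder B]
    [NonUnitalCStarAlgebra C] [PartialOrder C]
    [NormedAddCommGroup E] [NormedSpace ℂ E] [SMul Bᵐᵒᵖ E] [CStarModuleOld B E]
    [NormedAddCommGroup F] [NormedSpace ℂ F] [SMul Cᵐᵒᵖ F] [CStarModuleOld C F]
    (φ : B →⋆ₙₐ[ℂ] C) (u : E → F)
    (hu : ∀ x y : E, (inner C (u x) (u y) : C) = φ (inner B x y)) :
    ∀ x y z : E, u (x <• (inner B y z : B)) = (u x) <• (inner C (u y) (u z) : C) :=
  CStarModuleOld.map_op_smul_inner_eq_op_smul_inner hu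

theorem stmt1 {B C E F : Type*}
    [NonUnitalCStarAlgebra B] [PartialOrder B] [StarOrderedRing B]
    [NonUnitalCStarAlgebra C] [PartialOrder C] [StarOrderedRing C]
    [NormedAddCommGroup E] [NormedSpace ℂ E] [SMul Bᵐᵒᵖ E] [CStarModuleOld B E]
    [CompleteSpace E]
    [NormedAddCommGroup F] [NormedSpace ℂ F] [SMul Cᵐᵒᵖ F] [CStarModuleOld C F]
    [CompleteSpace F]
    (φ : B →⋆ₙₐ[ℂ] C) (u : E → F)
    (hu : ∀ x y : E, (inner C (u x) (u y) : C) = φ (inner B x y)) :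
    ∀ x y z : E, u (x <• (inner B y z : B)) = (u x) <• (inner C (u y) (u z) : C) :=
  stmt1_general φ u hu
end

section
/- Let E be a Hilbert B-module whose elements separate the points of B, i.e. (∀ x ∈ E, x·b = 0) implies b = 0. Then for every b ∈ B, ‖b‖ = sup over x in the closed unit ball of E of ‖x·b‖. -/
open scoped RightActions

/-- The December 2024 Mathlib `CStarModule` (right `A`-module, i.e. `SMul Aᵐᵒᵖ E`). -/
class CStarModuleRight (A E : Type*) [NonUnitalSemiring A] [StarRing A]
    [Module ℂ A] [AddCommGroup E] [Module ℂ E] [PartialOrder A] [SMul Aᵐᵒᵖ E] [Norm A] [Norm E]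
    extends Inner A E where
  inner_add_right {x} {y} {z} : inner x (y + z) = inner x y + inner x z
  inner_self_nonneg {x} : 0 ≤ inner x x
  inner_self {x} : inner x x = 0 ↔ x = 0
  inner_op_smul_right {a : A} {x y : E} : inner x (y <• a) = inner x y * a
  inner_smul_right_complex {z : ℂ} {x} {y} : inner x (z • y) = z • inner x y
  star_inner x y : star (inner x y) = inner y x
  norm_eq_sqrt_norm_inner_self x : ‖x‖ = √‖inner x x‖

/-! The supremum is the operator norm `S` of `x ↦ x <• b`, which is at most `‖b‖`. Conversely,
for `S² < r` let `e` be the positive part of `b b* - r`, so that `r e² ≤ e b b* e`. Since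
`‖x <• a‖ = ‖⟪x, x⟫^½ a‖`, conjugating by `⟪x, x⟫^½` gives
`r ‖x <• e‖² ≤ ‖x <• e <• b‖² ≤ S² ‖x <• e‖²`, so `e` annihilates `E` and hence `e = 0` by
separation. This forces `‖b‖² = ‖b b*‖ ≤ r`. -/

open scoped InnerProductSpace

section SpectralCutoff

variable {A : Type*} [NonUnitalCStarAlgebra A]

/-- The positive part of `c - r`. For `r < 0` this is the junk value `0`, since the function
does not vanish at `0`. -/
noncomputable def spectralCutoff (r : ℝ) (c : A) : A := cfcₙ (fun t : ℝ ↦ max (t - r) 0) c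

lemma isSelfAdjoint_spectralCutoff (r : ℝ) (c : A) : IsSelfAdjoint (spectralCutoff r c) :=
  cfcₙ_predicate _ c

variable [PartialOrder A] [StarOrderedRing A]

lemma smul_mul_self_spectralCutoff_le {r : ℝ} (hr : 0 ≤ r) {c : A} (hc : IsSelfAdjoint c) :
    r • (spectralCutoff r c * spectralCutoff r c) ≤
      spectralCutoff r c * c * spectralCutoff r c := by
  set g : ℝ → ℝ := fun t ↦ max (t - r) 0
  have hg0 : g 0 = 0 := by simpa [g] using hr
  have hL : cfcₙ (fun t ↦ r • (g t * g t)) c = r • (spectralCutoff r c * spectralCutoff r c) := by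
    rw [cfcₙ_smul r _ c, cfcₙ_mul g g c, spectralCutoff]
  have hR : cfcₙ (fun t ↦ g t * t * g t) c = spectralCutoff r c * c * spectralCutoff r c := by
    rw [cfcₙ_mul (fun t ↦ g t * t) g c, cfcₙ_mul g (fun t ↦ t) c, cfcₙ_id' ℝ c, spectralCutoff]
  rw [← hL, ← hR]
  refine cfcₙ_mono fun t _ ↦ ?_
  rcases le_total t r with htr | hrt
  · simp [g, max_eq_right (sub_nonpos.2 htr)]
  · simp only [g, smul_eq_mul, max_eq_left (sub_nonneg.2 hrt)]
    nlinarith [mul_self_nonneg (t - r)]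

lemma norm_le_of_spectralCutoff_eq_zero {r : ℝ} (hr : 0 ≤ r) {c : A} (hc : 0 ≤ c)
    (h : spectralCutoff r c = 0) : ‖c‖ ≤ r := by
  obtain ⟨t, ht, htc : ‖t‖ = ‖c‖⟩ :=
    (NonUnitalIsometricContinuousFunctionalCalculus.isGreatest_norm_quasispectrum (𝕜 := ℝ) c).1
  have ht0 : 0 ≤ t := quasispectrum_nonneg_of_nonneg c hc t ht
  have := norm_apply_le_norm_cfcₙ (fun t : ℝ ↦ max (t - r) 0) c ht (hf₀ := by simpa using hr)
  rw [← spectralCutoff, h, norm_zero, norm_le_zero_iff] at this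
  rw [← htc, Real.norm_of_nonneg ht0]
  linarith [le_max_left (t - r) 0]

lemma mul_norm_mul_spectralCutoff_sq_le {r : ℝ} (hr : 0 ≤ r) (y b : A) :
    r * ‖y * spectralCutoff r (b * star b)‖ ^ 2 ≤ ‖y * spectralCutoff r (b * star b) * b‖ ^ 2 := by
  set e := spectralCutoff r (b * star b)
  have he : star e = e := (isSelfAdjoint_spectralCutoff r _).star_eq
  have hconj := star_right_conjugate_le_conjugate
    (smul_mul_self_spectralCutoff_le hr (IsSelfAdjoint.mul_star_self b)) y
  have hL : y * r • (e * e) * star y = r • ((y * e) * star (y * e)) := by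
    rw [star_mul, he, mul_smul_comm, smul_mul_assoc]; simp only [mul_assoc]
  have hR : y * (e * (b * star b) * e) * star y = (y * e * b) * star (y * e * b) := by
    simp only [star_mul, he, mul_assoc]
  rw [hL, hR] at hconj
  have hnorm := CStarAlgebra.norm_le_norm_of_nonneg_of_le
    (smul_nonneg hr (mul_star_self_nonneg _)) hconj
  rwa [norm_smul, Real.norm_of_nonneg hr, CStarRing.norm_self_mul_star,
    CStarRing.norm_self_mul_star, ← sq, ← sq] at hnorm

end SpectralCutoff

namespace CStarModuleRight

variable {A E : Type*} [NonUnitalCStarAlgebra A] [PartialOrder A]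
  [NormedAddCommGroup E] [NormedSpace ℂ E] [SMul Aᵐᵒᵖ E] [CStarModuleRight A E]

lemma inner_sub_right (x y z : E) : ⟪x, y - z⟫_A = ⟪x, y⟫_A - ⟪x, z⟫_A :=
  eq_sub_of_add_eq (by rw [← inner_add_right, sub_add_cancel])

variable (A) in
lemma ext_inner_right {y z : E} (h : ∀ x : E, ⟪x, y⟫_A = ⟪x, z⟫_A) : y = z := by
  rw [← sub_eq_zero, ← inner_self (A := A), inner_sub_right, h, sub_self]

lemma add_op_smul (x y : E) (a : A) : (x + y) <• a = x <• a + y <• a :=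
  ext_inner_right A fun v ↦ by simp only [inner_op_smul_right, inner_add_right, add_mul]

lemma smul_op_smul (c : ℂ) (x : E) (a : A) : (c • x) <• a = c • (x <• a) :=
  ext_inner_right A fun v ↦ by
    simp only [inner_op_smul_right, inner_smul_right_complex, smul_mul_assoc]

lemma op_smul_op_smul (x : E) (a b : A) : x <• a <• b = x <• (a * b) :=
  ext_inner_right A fun v ↦ by simp only [inner_op_smul_right, mul_assoc]

lemma inner_op_smul_left (x y : E) (a : A) : ⟪x <• a, y⟫_A = star a * ⟪x, y⟫_A := by
  rw [← star_inner y, inner_op_smul_right, star_mul, star_inner]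

lemma norm_op_smul_le (x : E) (a : A) : ‖x <• a‖ ≤ ‖x‖ * ‖a‖ := by
  rw [norm_eq_sqrt_norm_inner_self (A := A), norm_eq_sqrt_norm_inner_self (A := A) x,
    inner_op_smul_right, inner_op_smul_left, ← Real.sqrt_mul_self (norm_nonneg a),
    ← Real.sqrt_mul (norm_nonneg _)]
  gcongr
  calc ‖star a * ⟪x, x⟫_A * a‖ ≤ ‖star a‖ * ‖⟪x, x⟫_A‖ * ‖a‖ := norm_mul₃_le
    _ = ‖⟪x, x⟫_A‖ * (‖a‖ * ‖a‖) := by rw [norm_star]; ring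

variable (E) in
noncomputable def opSMulCLM (a : A) : E →L[ℂ] E :=
  LinearMap.mkContinuous
    { toFun := fun x ↦ x <• a
      map_add' := fun x y ↦ add_op_smul x y a
      map_smul' := fun c x ↦ smul_op_smul c x a }
    ‖a‖ fun x ↦ by rw [mul_comm]; exact norm_op_smul_le x a

lemma norm_opSMulCLM_le (a : A) : ‖opSMulCLM E a‖ ≤ ‖a‖ :=
  LinearMap.mkContinuous_norm_le _ (norm_nonneg a) _

variable [StarOrderedRing A]

lemma norm_op_smul_eq_norm_sqrt_mul (x : E) (a : A) :
    ‖x <• a‖ = ‖CFC.sqrt ⟪x, x⟫_A * a‖ := by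
  set y := CFC.sqrt ⟪x, x⟫_A
  have hy_sa : IsSelfAdjoint y := .of_nonneg (CFC.sqrt_nonneg ⟪x, x⟫_A)
  have hy : star a * ⟪x, x⟫_A * a = star (y * a) * (y * a) := by
    rw [star_mul, hy_sa.star_eq, ← mul_assoc, mul_assoc (star a) y y,
      CFC.sqrt_mul_sqrt_self _ inner_self_nonneg]
  rw [norm_eq_sqrt_norm_inner_self (A := A), inner_op_smul_right, inner_op_smul_left, hy,
    CStarRing.norm_star_mul_self, Real.sqrt_mul_self (norm_nonneg _)]

lemma op_smul_spectralCutoff_eq_zero {b : A} {r : ℝ} (hr : ‖opSMulCLM E b‖ ^ 2 < r) (x : E) :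
    x <• spectralCutoff r (b * star b) = 0 := by
  set e := spectralCutoff r (b * star b)
  have hlower : r * ‖x <• e‖ ^ 2 ≤ ‖x <• e <• b‖ ^ 2 := by
    rw [norm_op_smul_eq_norm_sqrt_mul, op_smul_op_smul, norm_op_smul_eq_norm_sqrt_mul, ← mul_assoc]
    exact mul_norm_mul_spectralCutoff_sq_le ((sq_nonneg _).trans hr.le) _ b
  have hupper : ‖x <• e <• b‖ ^ 2 ≤ ‖opSMulCLM E b‖ ^ 2 * ‖x <• e‖ ^ 2 := by
    rw [← mul_pow]
    exact pow_le_pow_left₀ (norm_nonneg _) ((opSMulCLM E b).le_opNorm (x <• e)) 2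
  have hzero : ‖x <• e‖ ^ 2 = 0 := le_antisymm (by nlinarith) (sq_nonneg _)
  exact norm_eq_zero.1 (pow_eq_zero_iff two_ne_zero |>.1 hzero)

lemma norm_opSMulCLM (hsep : ∀ b : A, (∀ x : E, x <• b = 0) → b = 0) (b : A) :
    ‖opSMulCLM E b‖ = ‖b‖ := by
  refine le_antisymm (norm_opSMulCLM_le b) ?_
  have hsq : ‖b‖ ^ 2 ≤ ‖opSMulCLM E b‖ ^ 2 := le_of_forall_gt_imp_ge_of_dense fun r hr ↦ by
    rw [sq, ← CStarRing.norm_self_mul_star]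
    exact norm_le_of_spectralCutoff_eq_zero ((sq_nonneg _).trans hr.le) (mul_star_self_nonneg b)
      (hsep _ (op_smul_spectralCutoff_eq_zero hr))
  exact (pow_le_pow_iff_left₀ (norm_nonneg _) (norm_nonneg _) two_ne_zero).1 hsq

end CStarModuleRight

theorem stmt7_general {B E : Type*}
    [NonUnitalCStarAlgebra B] [PartialOrder B] [StarOrderedRing B]
    [NormedAddCommGroup E] [NormedSpace ℂ E] [SMul Bᵐᵒᵖ E] [CStarModuleRight B E]
    (hsep : ∀ b : B, (∀ x : E, x <• b = 0) → b = 0) :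
    ∀ b : B, ‖b‖ = ⨆ x : {x : E // ‖x‖ ≤ 1}, ‖(x : E) <• b‖ := by
  intro b
  rw [← CStarModuleRight.norm_opSMulCLM hsep b, ← ContinuousLinearMap.sSup_unitClosedBall_eq_norm,
    sSup_image']
  exact (Equiv.subtypeEquivRight fun x ↦ mem_closedBall_zero_iff).iSup_congr fun _ ↦ rfl

theorem stmt7 {B E : Type*}
    [NonUnitalCStarAlgebra B] [PartialOrder B] [StarOrderedRing B]
    [NormedAddCommGroup E] [NormedSpace ℂ E] [SMul Bᵐᵒᵖ E] [CStarModuleRight B E]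
    [CompleteSpace E]
    (hsep : ∀ b : B, (∀ x : E, x <• b = 0) → b = 0) :
    ∀ b : B, ‖b‖ = ⨆ x : {x : E // ‖x‖ ≤ 1}, ‖(x : E) <• b‖ :=
  stmt7_general hsep
end

section
/- Boundedness transfers from module derivation to algebra derivation: if E is a full Hilbert B-module, δ a d-derivation of E, and δ is bounded with norm ‖δ‖, then d is bounded with ‖d‖ ≤ 4‖δ‖. -/
/-! The Leibniz rule gives `x <• d b = δ (x <• b) - δ x <• b` on the dense domain of `δ`, so right
multiplication by `d b` is bounded on `E` by `2 ‖δ‖ ‖b‖`. Fullness makes the right action of `B`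
on `E` faithful, hence isometric: if `a ≥ 0` acted with bound `ν < ‖a‖`, pick `ν < θ < ‖a‖`; the
cutoff `b = (a - θ)⁺` factors as `θ⁻ⁿ g(a) aⁿ` with `‖g(a)‖ ≤ ‖b‖`, so `‖x <• b‖ ≤ (ν/θ)ⁿ ‖x‖ ‖b‖`
for all `n`. Thus `E <• b = 0`, so `b = 0`, contradicting `‖b‖ ≥ ‖a‖ - θ > 0`. A general `c` is
handled through `‖c‖² = ‖star c * c‖`. -/

open Filter Topology
open scoped RightActions

/-- The right Hilbert C⋆-module class `CStarModule` as it stood in Mathlib of December 2024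
(right action by `Aᵐᵒᵖ`, `⟪x, y <• a⟫ = ⟪x, y⟫ * a`); Mathlib's `CStarModule` is now a left module. -/
class RightCStarModule (A E : Type*) [NonUnitalSemiring A] [StarRing A] [Module ℂ A]
    [AddCommGroup E] [Module ℂ E] [PartialOrder A] [SMul Aᵐᵒᵖ E] [Norm A] [Norm E]
    extends Inner A E where
  inner_add_right {x} {y} {z} : inner x (y + z) = inner x y + inner x z
  inner_self_nonneg {x} : 0 ≤ inner x x
  inner_self {x} : inner x x = 0 ↔ x = 0
  inner_op_smul_right {a : A} {x y : E} : inner x (y <• a) = inner x y * a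
  inner_smul_right_complex {z : ℂ} {x} {y} : inner x (z • y) = z • inner x y
  star_inner x y : star (inner x y) = inner y x
  norm_eq_sqrt_norm_inner_self x : ‖x‖ = √‖inner x x‖

namespace RightCStarModule

section Algebra

variable {A E : Type*} [NonUnitalRing A] [StarRing A] [Module ℂ A] [AddCommGroup E] [Module ℂ E]
  [PartialOrder A] [SMul Aᵐᵒᵖ E] [Norm A] [Norm E] [RightCStarModule A E]

lemma inner_sub_right {x y z : E} : inner A x (y - z) = inner A x y - inner A x z := by
  rw [eq_sub_iff_add_eq, ← inner_add_right, sub_add_cancel]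

lemma inner_zero_right {x : E} : inner A x (0 : E) = 0 := by
  simpa using inner_sub_right (A := A) (x := x) (y := 0) (z := 0)

lemma inner_op_smul_left {a : A} {x y : E} : inner A (x <• a) y = star a * inner A x y := by
  rw [← star_inner, inner_op_smul_right, star_mul, star_inner]

lemma ext_inner_left {x y : E} (h : ∀ z : E, inner A z x = inner A z y) : x = y := by
  rw [← sub_eq_zero, ← inner_self (A := A), inner_sub_right, h, sub_self]

lemma op_smul_op_smul (x : E) (a b : A) : x <• a <• b = x <• (a * b) :=
  ext_inner_left (A := A) fun z => by simp only [inner_op_smul_right, mul_assoc]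

lemma sub_op_smul (x y : E) (a : A) : (x - y) <• a = x <• a - y <• a :=
  ext_inner_left (A := A) fun z => by simp only [inner_op_smul_right, inner_sub_right, sub_mul]

end Algebra

def IsFull (B E : Type*) [NonUnitalCStarAlgebra B] [PartialOrder B] [NormedAddCommGroup E]
    [NormedSpace ℂ E] [SMul Bᵐᵒᵖ E] [RightCStarModule B E] : Prop :=
  (Submodule.span ℂ {b : B | ∃ x y : E, inner B x y = b}).topologicalClosure = ⊤

variable {B E : Type*} [NonUnitalCStarAlgebra B] [PartialOrder B] [NormedAddCommGroup E]
  [NormedSpace ℂ E] [SMul Bᵐᵒᵖ E] [RightCStarModule B E]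

lemma op_smul_real_smul (x : E) (r : ℝ) (a : B) : x <• (r • a) = r • (x <• a) :=
  ext_inner_left (A := B) fun z => by
    rw [inner_op_smul_right, RCLike.real_smul_eq_coe_smul (K := ℂ) r (x <• a),
      inner_smul_right_complex, inner_op_smul_right, ← RCLike.real_smul_eq_coe_smul,
      mul_smul_comm]

lemma norm_op_smul_le (x : E) (a : B) : ‖x <• a‖ ≤ ‖x‖ * ‖a‖ := by
  have hsq : ‖inner B (x <• a) (x <• a)‖ ≤ (‖x‖ * ‖a‖) ^ 2 := by
    rw [inner_op_smul_left, inner_op_smul_right, ← mul_assoc]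
    calc ‖star a * inner B x x * a‖ ≤ ‖star a‖ * ‖inner B x x‖ * ‖a‖ := norm_mul₃_le
      _ = (‖x‖ * ‖a‖) ^ 2 := by
        rw [norm_star, norm_eq_sqrt_norm_inner_self (A := B) x, mul_pow,
          Real.sq_sqrt (norm_nonneg _)]
        ring
  rw [norm_eq_sqrt_norm_inner_self (A := B)]
  exact (Real.sqrt_le_left (by positivity)).mpr hsq

lemma lipschitzWith_op_smul (a : B) : LipschitzWith ‖a‖₊ fun x : E => x <• a :=
  LipschitzWith.of_dist_le_mul fun x y => by
    simpa only [dist_eq_norm, ← sub_op_smul, coe_nnnorm, mul_comm] using norm_op_smul_le (x - y) a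

lemma forall_norm_op_smul_le_of_dense {s : Set E} (hs : Dense s) {a : B} {K : ℝ}
    (h : ∀ x ∈ s, ‖x <• a‖ ≤ K * ‖x‖) (x : E) : ‖x <• a‖ ≤ K * ‖x‖ :=
  hs.induction h (isClosed_le ((lipschitzWith_op_smul a).continuous.norm)
    (continuous_const.mul continuous_norm)) x

lemma eq_zero_of_forall_op_smul_eq_zero (hfull : IsFull B E) {a : B}
    (h : ∀ x : E, x <• a = 0) : a = 0 := by
  let mulRight : B →L[ℂ] B := (ContinuousLinearMap.mul ℂ B).flip a
  have hspan : Submodule.span ℂ {b : B | ∃ x y : E, inner B x y = b}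
      ≤ LinearMap.ker (mulRight : B →ₗ[ℂ] B) := by
    rw [Submodule.span_le]
    rintro - ⟨x, y, rfl⟩
    change inner B x y * a = 0
    rw [← inner_op_smul_right, h, inner_zero_right]
  have hker : LinearMap.ker (mulRight : B →ₗ[ℂ] B) = ⊤ := by
    rw [eq_top_iff, ← hfull]
    exact Submodule.topologicalClosure_minimal _ hspan mulRight.isClosed_ker
  have hstar : star a * a = 0 := LinearMap.congr_fun (LinearMap.ker_eq_top.mp hker) (star a)
  exact CStarRing.star_mul_self_eq_zero_iff a |>.mp hstar

lemma norm_op_smul_cfcₙ_pow_le {a : B} (ha : IsSelfAdjoint a) {ν : ℝ} (hν : 0 ≤ ν)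
    (h : ∀ x : E, ‖x <• a‖ ≤ ν * ‖x‖) (n : ℕ) (x : E) :
    ‖x <• cfcₙ (fun t : ℝ => t ^ (n + 1)) a‖ ≤ ν ^ (n + 1) * ‖x‖ := by
  induction n generalizing x with
  | zero => simpa only [zero_add, pow_one, cfcₙ_id' ℝ a] using h x
  | succ n ih =>
    simp only [pow_succ _ (n + 1)]
    rw [cfcₙ_mul (fun t : ℝ => t ^ (n + 1)) (fun t => t) a, cfcₙ_id' ℝ a, ← op_smul_op_smul]
    calc ‖x <• cfcₙ (fun t : ℝ => t ^ (n + 1)) a <• a‖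
        ≤ ν * ‖x <• cfcₙ (fun t : ℝ => t ^ (n + 1)) a‖ := h _
      _ ≤ ν * (ν ^ (n + 1) * ‖x‖) := by gcongr; exact ih x
      _ = ν ^ (n + 1) * ν * ‖x‖ := by ring

lemma norm_op_smul_cfcₙ_max_sub_le {a : B} (ha : IsSelfAdjoint a) {ν : ℝ} (hν : 0 ≤ ν)
    (h : ∀ x : E, ‖x <• a‖ ≤ ν * ‖x‖) {θ : ℝ} (hθ : 0 < θ) (n : ℕ) (x : E) :
    θ ^ (n + 1) * ‖x <• cfcₙ (fun t : ℝ => max (t - θ) 0) a‖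
      ≤ ν ^ (n + 1) * (‖x‖ * ‖cfcₙ (fun t : ℝ => max (t - θ) 0) a‖) := by
  set f : ℝ → ℝ := fun t => max (t - θ) 0
  have hf₀ : f 0 = 0 := max_eq_right (by linarith)
  -- `f = g · tⁿ⁺¹ / θⁿ⁺¹` with `|g| ≤ |f|`, because `f` vanishes below `θ`
  set g : ℝ → ℝ := fun t => f t * (θ / max t θ) ^ (n + 1)
  have hf : Continuous f := by fun_prop
  have hg : Continuous g := hf.mul <| (continuous_const.div (continuous_id.max continuous_const)
    fun t => (hθ.trans_le (le_max_right t θ)).ne').pow _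
  have hfactor : θ ^ (n + 1) • cfcₙ f a = cfcₙ g a * cfcₙ (fun t : ℝ => t ^ (n + 1)) a := by
    rw [← cfcₙ_mul g _ a hg.continuousOn (by simp [g, hf₀]),
      ← cfcₙ_smul _ f a hf.continuousOn hf₀]
    refine cfcₙ_congr fun t _ => ?_
    rcases le_or_gt t θ with ht | ht
    · simp [f, g, max_eq_right (sub_nonpos.mpr ht)]
    · have ht₀ : t ≠ 0 := (hθ.trans ht).ne'
      simp only [g, max_eq_left ht.le, smul_eq_mul, div_pow]
      field_simp
  have hg_le : ‖cfcₙ g a‖ ≤ ‖cfcₙ f a‖ := by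
    refine norm_cfcₙ_le fun t ht => ?_
    refine le_trans ?_ (norm_apply_le_norm_cfcₙ f a ht hf.continuousOn hf₀)
    rw [norm_mul, norm_pow]
    refine mul_le_of_le_one_right (norm_nonneg _) (pow_le_one₀ (norm_nonneg _) ?_)
    rw [Real.norm_of_nonneg (by positivity)]
    exact div_le_one_of_le₀ (le_max_right t θ) (by positivity)
  calc θ ^ (n + 1) * ‖x <• cfcₙ f a‖ = ‖x <• (θ ^ (n + 1) • cfcₙ f a)‖ := by
        rw [op_smul_real_smul, norm_smul (θ ^ (n + 1)), Real.norm_of_nonneg (by positivity)]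
    _ = ‖x <• cfcₙ g a <• cfcₙ (fun t : ℝ => t ^ (n + 1)) a‖ := by
        rw [hfactor, op_smul_op_smul]
    _ ≤ ν ^ (n + 1) * ‖x <• cfcₙ g a‖ := norm_op_smul_cfcₙ_pow_le ha hν h n _
    _ ≤ ν ^ (n + 1) * (‖x‖ * ‖cfcₙ f a‖) := by
        gcongr
        exact (norm_op_smul_le x _).trans (by gcongr)

variable [StarOrderedRing B]

lemma cfcₙ_max_sub_ne_zero {a : B} (ha : 0 ≤ a) {θ : ℝ} (hθ₀ : 0 ≤ θ) (hθ : θ < ‖a‖) :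
    cfcₙ (fun t : ℝ => max (t - θ) 0) a ≠ 0 := by
  have hmem : ‖a‖ ∈ quasispectrum ℝ a := by
    rw [Unitization.quasispectrum_eq_spectrum_inr' ℝ ℂ a, ← Unitization.norm_inr (𝕜 := ℂ)]
    exact CStarAlgebra.norm_mem_spectrum_of_nonneg (Unitization.inr_nonneg_iff.mpr ha)
  intro hzero
  have hle := norm_apply_le_norm_cfcₙ (fun t : ℝ => max (t - θ) 0) a hmem
  rw [hzero, norm_zero, Real.norm_of_nonneg (le_max_right _ _)] at hle
  linarith [le_max_left (‖a‖ - θ) 0]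

lemma norm_le_of_forall_norm_op_smul_le_of_nonneg (hfull : IsFull B E) {a : B} (ha : 0 ≤ a)
    {ν : ℝ} (hν : 0 ≤ ν) (h : ∀ x : E, ‖x <• a‖ ≤ ν * ‖x‖) : ‖a‖ ≤ ν := by
  by_contra! hlt
  obtain ⟨θ, hνθ, hθa⟩ := exists_between hlt
  have hθ : 0 < θ := hν.trans_lt hνθ
  refine cfcₙ_max_sub_ne_zero ha hθ.le hθa (eq_zero_of_forall_op_smul_eq_zero hfull fun x => ?_)
  set b := cfcₙ (fun t : ℝ => max (t - θ) 0) a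
  have hlim : Tendsto (fun n : ℕ => (ν / θ) ^ (n + 1) * (‖x‖ * ‖b‖)) atTop (𝓝 0) := by
    have hpow := tendsto_pow_atTop_nhds_zero_of_lt_one (div_nonneg hν hθ.le)
      ((div_lt_one hθ).mpr hνθ)
    simpa only [zero_mul, Function.comp_def] using
      (hpow.comp (tendsto_add_atTop_nat 1)).mul_const (‖x‖ * ‖b‖)
  refine norm_le_zero_iff.mp (ge_of_tendsto' hlim fun n => ?_)
  rw [div_pow, div_mul_eq_mul_div, le_div_iff₀' (by positivity)]
  exact norm_op_smul_cfcₙ_max_sub_le ha.isSelfAdjoint hν h hθ n x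

lemma norm_le_of_forall_norm_op_smul_le (hfull : IsFull B E) {a : B} {K : ℝ} (hK : 0 ≤ K)
    (h : ∀ x : E, ‖x <• a‖ ≤ K * ‖x‖) : ‖a‖ ≤ K := by
  have hstar : ‖star a * a‖ ≤ K * ‖a‖ := by
    refine norm_le_of_forall_norm_op_smul_le_of_nonneg hfull (star_mul_self_nonneg a)
      (by positivity) fun x => ?_
    calc ‖x <• (star a * a)‖ = ‖x <• star a <• a‖ := by rw [op_smul_op_smul]
      _ ≤ K * (‖x‖ * ‖star a‖) := (h _).trans (by gcongr; exact norm_op_smul_le x _)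
      _ = K * ‖a‖ * ‖x‖ := by rw [norm_star]; ring
  rw [CStarRing.norm_star_mul_self] at hstar
  nlinarith [norm_nonneg a]

end RightCStarModule

theorem stmt13_general {B E : Type*}
    [NonUnitalCStarAlgebra B] [PartialOrder B] [StarOrderedRing B]
    [NormedAddCommGroup E] [NormedSpace ℂ E] [SMul Bᵐᵒᵖ E] [RightCStarModule B E]
    (hfull : (Submodule.span ℂ {b : B | ∃ x y : E, (inner B x y : B) = b}).topologicalClosure = ⊤)
    (D : Submodule ℂ E) (hdense : Dense (D : Set E)) (δ : D →ₗ[ℂ] E)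
    (B₀ : NonUnitalSubalgebra ℂ B) (d : B₀ →ₗ[ℂ] B)
    (hmod : ∀ (x : D) (b : B₀), (x : E) <• (b : B) ∈ D)
    (hder : ∀ (x : D) (b : B₀),
      δ ⟨(x : E) <• (b : B), hmod x b⟩ = δ x <• (b : B) + (x : E) <• d b)
    (M : ℝ) (hM : 0 ≤ M) (hbound : ∀ x : D, ‖δ x‖ ≤ M * ‖(x : E)‖) :
    ∀ b : B₀, ‖d b‖ ≤ 4 * M * ‖(b : B)‖ := by
  intro b
  have hD : ∀ x ∈ D, ‖x <• d b‖ ≤ 2 * M * ‖(b : B)‖ * ‖x‖ := by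
    intro x hx
    have hx' : x <• d b = δ ⟨x <• (b : B), hmod ⟨x, hx⟩ b⟩ - δ ⟨x, hx⟩ <• (b : B) := by
      rw [hder ⟨x, hx⟩ b]
      abel
    calc ‖x <• d b‖ ≤ ‖δ ⟨x <• (b : B), hmod ⟨x, hx⟩ b⟩‖ + ‖δ ⟨x, hx⟩ <• (b : B)‖ :=
          hx' ▸ norm_sub_le _ _
      _ ≤ M * (‖x‖ * ‖(b : B)‖) + M * ‖x‖ * ‖(b : B)‖ := by
          gcongr
          · exact (hbound _).trans (by gcongr; exact RightCStarModule.norm_op_smul_le x _)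
          · exact (RightCStarModule.norm_op_smul_le _ _).trans (by gcongr; exact hbound _)
      _ = 2 * M * ‖(b : B)‖ * ‖x‖ := by ring
  calc ‖d b‖ ≤ 2 * M * ‖(b : B)‖ :=
        RightCStarModule.norm_le_of_forall_norm_op_smul_le hfull (by positivity)
          (RightCStarModule.forall_norm_op_smul_le_of_dense hdense hD)
    _ ≤ 4 * M * ‖(b : B)‖ := by gcongr; norm_num

/-- Boundedness transfers from the module derivation `δ` to the algebra derivation `d`,
with `‖d‖ ≤ 4 ‖δ‖`. -/
theorem stmt13 {B E : Type*}
    [NonUnitalCStarAlgebra B] [PartialOrder B] [StarOrderedRing B]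
    [NormedAddCommGroup E] [NormedSpace ℂ E] [SMul Bᵐᵒᵖ E] [RightCStarModule B E]
    [CompleteSpace E]
    (hfull : (Submodule.span ℂ {b : B | ∃ x y : E, (inner B x y : B) = b}).topologicalClosure = ⊤)
    (D : Submodule ℂ E) (hdense : Dense (D : Set E)) (δ : D →ₗ[ℂ] E)
    (B₀ : NonUnitalSubalgebra ℂ B) (d : B₀ →ₗ[ℂ] B)
    (hleib : ∀ (b b' : B₀) (h : (b : B) * (b' : B) ∈ B₀),
      d ⟨(b : B) * (b' : B), h⟩ = d b * (b' : B) + (b : B) * d b')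
    (hmod : ∀ (x : D) (b : B₀), (x : E) <• (b : B) ∈ D)
    (hder : ∀ (x : D) (b : B₀),
      δ ⟨(x : E) <• (b : B), hmod x b⟩ = δ x <• (b : B) + (x : E) <• d b)
    (M : ℝ) (hM : 0 ≤ M) (hbound : ∀ x : D, ‖δ x‖ ≤ M * ‖(x : E)‖) :
    ∀ b : B₀, ‖d b‖ ≤ 4 * M * ‖(b : B)‖ :=
  stmt13_general hfull D hdense δ B₀ d hmod hder M hM hbound
end
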